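/- NEG1 does not imply NEG2 and NEG2 does not imply NEG1: there exist pairs of deductive arguments (with an arc labelled −) witnessing each failure. -/
import Mathlib


inductive PropForm (α : Type) : Type
  | atom : α → PropForm α
  | fals : PropForm α
  | imp : PropForm α → PropForm α → PropForm α

namespace PropForm

def eval {α : Type} (v : α → Prop) : PropForm α → Prop
  | atom a => v a
  | fals => False
  | imp p q => eval v p → eval v q

end PropForm

/-- `v` satisfies every formula in `S`. -/
def Models {α : Type} (v : α → Prop) (S : Set (PropForm α)) : Prop :=
  ∀ φ ∈ S, φ.eval v

/-- Classical (semantic) consequence: `S ⊢ ψ`. -/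
def Entails {α : Type} (S : Set (PropForm α)) (ψ : PropForm α) : Prop :=
  ∀ v : α → Prop, Models v S → ψ.eval v

/-- `S ⊬ ⊥`. -/
def Consistent {α : Type} (S : Set (PropForm α)) : Prop :=
  ∃ v : α → Prop, Models v S

/-- A deductive argument `⟨Φ,α⟩`: `Φ` consistent, `Φ ⊢ α`, `Φ` minimal. -/
structure Argument (α : Type) where
  support : Finset (PropForm α)
  claim : PropForm α
  con : Consistent (support : Set (PropForm α))
  ent : Entails (support : Set (PropForm α)) claim
  min : ∀ Ψ : Finset (PropForm α), Ψ ⊂ support → ¬ Entails (Ψ : Set (PropForm α)) claim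

/-- `Claim(I) ⊢ ¬⋀Support(J)`. -/
def Defeater {α : Type} (I J : Argument α) : Prop :=
  ∀ v : α → Prop, I.claim.eval v → ¬ Models v (J.support : Set (PropForm α))

/-- `Claim(I) ≡ ¬⋀Ψ` for some `Ψ ⊆ Support(J)`. -/
def Undercut {α : Type} (I J : Argument α) : Prop :=
  ∃ Ψ : Finset (PropForm α), Ψ ⊆ J.support ∧
    ∀ v : α → Prop, I.claim.eval v ↔ ¬ Models v (Ψ : Set (PropForm α))

/-- `Claim(I) ≡ ¬φ` for some `φ ∈ Support(J)`. -/
def DirectUndercut {α : Type} (I J : Argument α) : Prop :=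
  ∃ φ ∈ J.support, ∀ v : α → Prop, I.claim.eval v ↔ ¬ φ.eval v

/-- `Claim(I) ≡ ¬⋀Support(J)`. -/
def CanonicalUndercut {α : Type} (I J : Argument α) : Prop :=
  ∀ v : α → Prop, I.claim.eval v ↔ ¬ Models v (J.support : Set (PropForm α))

/-- `Claim(I) ⊢ ¬Claim(J)`. -/
def DefeatingRebuttal {α : Type} (I J : Argument α) : Prop :=
  ∀ v : α → Prop, I.claim.eval v → ¬ J.claim.eval v

inductive Lbl | pos | neg | amb
deriving DecidableEq

/-- An instantiated bipolar argument graph. -/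
structure IBAG (ν α : Type) where
  arc : ν → ν → Prop
  lbl : ν → ν → Lbl
  inst : ν → Argument α

namespace IBAG

variable {ν α : Type}

def NEG1 (G : IBAG ν α) : Prop :=
  ∀ A B, G.arc A B → G.lbl A B = Lbl.neg →
    ¬ Entails {(G.inst A).claim} (G.inst B).claim

def NEG2 (G : IBAG ν α) : Prop :=
  ∀ A B, G.arc A B → G.lbl A B = Lbl.neg →
    ∀ φ ∈ (G.inst B).support, ¬ Entails {(G.inst A).claim} φ

def NEG3 (G : IBAG ν α) : Prop :=
  ∀ A B, G.arc A B → G.lbl A B = Lbl.neg →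
    ¬ Consistent ({(G.inst A).claim} ∪ ((G.inst B).support : Set (PropForm α)))

def NEG4 (G : IBAG ν α) : Prop :=
  ∀ A B C, G.arc A B → G.lbl A B = Lbl.neg →
    Entails {(G.inst C).claim} (G.inst A).claim →
    G.arc C B ∧ G.lbl C B = Lbl.neg

def NEG5 (G : IBAG ν α) : Prop :=
  ∀ A B C, G.arc A B → G.lbl A B = Lbl.neg →
    (G.inst B).support ⊆ (G.inst C).support →
    G.arc A C ∧ G.lbl A C = Lbl.neg

def NEG6 (G : IBAG ν α) : Prop :=
  ∀ A B C, G.arc A B → G.lbl A B = Lbl.neg →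
    Entails {(G.inst C).claim} (G.inst A).claim →
    G.arc C B → G.lbl C B ≠ Lbl.pos

def NEG7 (G : IBAG ν α) : Prop :=
  ∀ A B C, G.arc A B → G.lbl A B = Lbl.neg →
    (G.inst B).support ⊆ (G.inst C).support →
    G.arc A C → G.lbl A C ≠ Lbl.pos

def POS1 (G : IBAG ν α) : Prop :=
  ∀ A B, G.arc A B → G.lbl A B = Lbl.pos →
    Consistent (((G.inst A).support : Set (PropForm α)) ∪ ((G.inst B).support : Set (PropForm α)))

def POS2 (G : IBAG ν α) : Prop :=
  ∀ A B, G.arc A B → G.lbl A B = Lbl.pos →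
    Consistent ({(G.inst A).claim} ∪ ((G.inst B).support : Set (PropForm α)))

def POS3 (G : IBAG ν α) : Prop :=
  ∀ A B, G.arc A B → G.lbl A B = Lbl.pos →
    ∃ φ ∈ (G.inst B).support, (G.inst A).claim = φ

def POS4 (G : IBAG ν α) : Prop :=
  ∀ A B, G.arc A B → G.lbl A B = Lbl.pos →
    ∃ Γ : Finset (PropForm α), Γ ⊆ (G.inst B).support ∧
      ∀ v : α → Prop, (G.inst A).claim.eval v → Models v (Γ : Set (PropForm α))

def POS5 (G : IBAG ν α) : Prop :=
  ∀ A B, G.arc A B → G.lbl A B = Lbl.pos →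
    (∀ v : α → Prop, (G.inst A).claim.eval v → Models v ((G.inst B).support : Set (PropForm α))) ∧
      (G.inst B).support ≠ ∅

def POS6 (G : IBAG ν α) : Prop :=
  ∀ A B C, G.arc A B → G.lbl A B = Lbl.pos →
    Entails {(G.inst C).claim} (G.inst A).claim →
    G.arc C B ∧ G.lbl C B = Lbl.pos

def POS7 (G : IBAG ν α) : Prop :=
  ∀ A B C, G.arc A B → G.lbl A B = Lbl.pos →
    (G.inst B).support ⊆ (G.inst C).support →
    G.arc A C ∧ G.lbl A C = Lbl.pos

def POS8 (G : IBAG ν α) : Prop :=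
  ∀ A B C, G.arc A B → G.lbl A B = Lbl.pos →
    G.arc C B → Entails {(G.inst C).claim} (G.inst A).claim →
    G.lbl C B ≠ Lbl.neg

def POS9 (G : IBAG ν α) : Prop :=
  ∀ A B C, G.arc A B → G.lbl A B = Lbl.pos →
    G.arc A C → (G.inst B).support ⊆ (G.inst C).support →
    G.lbl A C ≠ Lbl.neg

def INC1 (G : IBAG ν α) : Prop :=
  ∀ A B, ¬ Consistent ({(G.inst A).claim} ∪ ((G.inst B).support : Set (PropForm α))) →
    G.arc A B ∧ G.lbl A B = Lbl.neg

def INC2 (G : IBAG ν α) : Prop :=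
  ∀ A B, ¬ Consistent ({(G.inst A).claim} ∪ ((G.inst B).support : Set (PropForm α))) →
    G.arc A B ∧ G.lbl A B ≠ Lbl.pos

def INC3 (G : IBAG ν α) : Prop :=
  ∀ A B, ¬ Consistent ({(G.inst A).claim} ∪ ((G.inst B).support : Set (PropForm α))) →
    G.arc A B → G.lbl A B ≠ Lbl.pos

def SUP1 (G : IBAG ν α) : Prop :=
  ∀ A B, (∃ φ ∈ (G.inst B).support, (G.inst A).claim = φ) →
    G.arc A B ∧ G.lbl A B = Lbl.pos

def SUP2 (G : IBAG ν α) : Prop :=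
  ∀ A B, (∃ Γ : Finset (PropForm α), Γ.Nonempty ∧ Γ ⊆ (G.inst B).support ∧
      ∀ v : α → Prop, (G.inst A).claim.eval v → Models v (Γ : Set (PropForm α))) →
    G.arc A B ∧ G.lbl A B = Lbl.pos

def SUP3 (G : IBAG ν α) : Prop :=
  ∀ A B, (∃ φ ∈ (G.inst B).support, (G.inst A).claim = φ) →
    G.arc A B ∧ G.lbl A B ≠ Lbl.neg

def SUP4 (G : IBAG ν α) : Prop :=
  ∀ A B, (∃ Γ : Finset (PropForm α), Γ.Nonempty ∧ Γ ⊆ (G.inst B).support ∧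
      ∀ v : α → Prop, (G.inst A).claim.eval v → Models v (Γ : Set (PropForm α))) →
    G.arc A B ∧ G.lbl A B ≠ Lbl.neg

def SUP5 (G : IBAG ν α) : Prop :=
  ∀ A B, (∃ φ ∈ (G.inst B).support, Entails {(G.inst A).claim} φ) →
    G.arc A B → G.lbl A B ≠ Lbl.neg

def SUP6 (G : IBAG ν α) : Prop :=
  ∀ A B, (∃ Γ : Finset (PropForm α), Γ.Nonempty ∧ Γ ⊆ (G.inst B).support ∧
      ∀ v : α → Prop, (G.inst A).claim.eval v → Models v (Γ : Set (PropForm α))) →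
    G.arc A B → G.lbl A B ≠ Lbl.neg

/-- `Args(Δ)`: all deductive arguments whose support comes from `Δ`. -/
def ArgsOf {α : Type} (Δ : Finset (PropForm α)) : Set (Argument α) :=
  {I : Argument α | I.support ⊆ Δ}

/-- The set of instantiated arguments of the graph. -/
def Codomain (G : IBAG ν α) : Set (Argument α) := Set.range G.inst

def Uses (G : IBAG ν α) (Δ : Finset (PropForm α)) : Prop :=
  G.Codomain ⊆ ArgsOf Δ

def Exhausts (G : IBAG ν α) (Δ : Finset (PropForm α)) : Prop :=
  G.Codomain = ArgsOf Δ

/-- All formulae occurring in the supports of instantiated arguments. -/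
def Inform (G : IBAG ν α) : Set (PropForm α) :=
  {φ | ∃ I ∈ G.Codomain, φ ∈ I.support}

def Displays (G : IBAG ν α) (Δ : Finset (PropForm α)) : Prop :=
  (↑Δ : Set (PropForm α)) = G.Inform

end IBAG



section Witnesses
open PropForm

deriving instance DecidableEq for PropForm

abbrev pa : PropForm Bool := .atom true
abbrev pb : PropForm Bool := .atom false

/-- ⟨{a}, a⟩ -/
def argA1 : Argument Bool where
  support := {pa}
  claim := pa
  con := ⟨fun _ => True, by intro φ hφ; simp at hφ; subst hφ; simp [eval]⟩
  ent := by intro v hv; exact hv pa (by simp)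
  min := by
    intro Ψ hΨ hE
    have h0 : Ψ = ∅ := Finset.eq_empty_of_ssubset_singleton hΨ
    subst h0
    exact hE (fun _ => False) (by intro φ hφ; simp at hφ)

/-- ⟨{a, a→b}, b⟩ -/
def argB1 : Argument Bool where
  support := {pa, pa.imp pb}
  claim := pb
  con := ⟨fun _ => True, by intro φ hφ; simp at hφ; rcases hφ with h | h <;> subst h <;> simp [eval]⟩
  ent := by
    intro v hv
    have h1 := hv pa (by simp)
    have h2 := hv (pa.imp pb) (by simp)
    exact h2 h1
  min := by
    intro Ψ hΨ hE
    have hne : ¬ ({pa, pa.imp pb} : Finset (PropForm Bool)) ⊆ Ψ := hΨ.2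
    by_cases ha : pa ∈ Ψ
    · have hb : pa.imp pb ∉ Ψ := by
        intro hb; exact hne (by intro x hx; simp at hx; rcases hx with h|h <;> subst h <;> assumption)
      -- valuation: a true, b false
      have := hE (fun x => x = true) ?_
      · simp [eval] at this
      · intro φ hφ
        have hφ' : φ ∈ ({pa, pa.imp pb} : Finset (PropForm Bool)) := hΨ.1 hφ
        simp at hφ'
        rcases hφ' with h|h
        · subst h; simp [eval]
        · exact absurd (h ▸ hφ) hb
    · -- a ∉ Ψ, valuation all false
      have := hE (fun _ => False) ?_
      · simp [eval] at this
      · intro φ hφ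
        have hφ' : φ ∈ ({pa, pa.imp pb} : Finset (PropForm Bool)) := hΨ.1 hφ
        simp at hφ'
        rcases hφ' with h|h
        · exact absurd (h ▸ hφ) ha
        · subst h; simp [eval]

/-- ⟨{b}, b⟩ -/
def argA2 : Argument Bool where
  support := {pb}
  claim := pb
  con := ⟨fun _ => True, by intro φ hφ; simp at hφ; subst hφ; simp [eval]⟩
  ent := by intro v hv; exact hv pb (by simp)
  min := by
    intro Ψ hΨ hE
    have h0 : Ψ = ∅ := Finset.eq_empty_of_ssubset_singleton hΨ
    subst h0
    exact hE (fun _ => False) (by intro φ hφ; simp at hφ)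

/-- ⟨{a}, a∨b⟩ where a∨b = ¬a→b -/
def argB2 : Argument Bool where
  support := {pa}
  claim := (pa.imp .fals).imp pb
  con := ⟨fun _ => True, by intro φ hφ; simp at hφ; subst hφ; simp [eval]⟩
  ent := by
    intro v hv
    have h1 := hv pa (by simp)
    intro h2
    exact absurd h1 h2
  min := by
    intro Ψ hΨ hE
    have h0 : Ψ = ∅ := Finset.eq_empty_of_ssubset_singleton hΨ
    subst h0
    have := hE (fun _ => False) (by intro φ hφ; simp at hφ)
    simp [eval] at this

def G1 : IBAG Bool Bool where
  arc A B := A = false ∧ B = true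
  lbl _ _ := Lbl.neg
  inst A := if A then argB1 else argA1

def G2 : IBAG Bool Bool where
  arc A B := A = false ∧ B = true
  lbl _ _ := Lbl.neg
  inst A := if A then argB2 else argA2

end Witnesses

theorem NEG1_NEG2_independent :
    (∃ (ν α : Type) (G : IBAG ν α),
      (∃ A B, G.arc A B ∧ G.lbl A B = Lbl.neg) ∧ G.NEG1 ∧ ¬ G.NEG2) ∧
    (∃ (ν α : Type) (G : IBAG ν α),
      (∃ A B, G.arc A B ∧ G.lbl A B = Lbl.neg) ∧ G.NEG2 ∧ ¬ G.NEG1) := by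
  constructor
  · refine ⟨Bool, Bool, G1, ⟨false, true, ⟨rfl, rfl⟩, rfl⟩, ?_, ?_⟩
    · intro A B hab _
      obtain ⟨hA, hB⟩ := hab
      subst hA; subst hB
      intro hE
      have := hE (fun x => x = true) (by
        intro φ hφ; simp [G1, argA1] at hφ; subst hφ; simp [PropForm.eval])
      simp [G1, argB1, PropForm.eval] at this
    · intro h
      have := h false true ⟨rfl, rfl⟩ rfl pa (by simp [G1, argB1])
      exact this (by intro v hv; exact hv _ (by simp [G1, argA1]))
  · refine ⟨Bool, Bool, G2, ⟨false, true, ⟨rfl, rfl⟩, rfl⟩, ?_, ?_⟩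
    · intro A B hab _ φ hφ
      obtain ⟨hA, hB⟩ := hab
      subst hA; subst hB
      simp [G2, argB2] at hφ
      subst hφ
      intro hE
      have := hE (fun x => x = false) (by
        intro ψ hψ; simp [G2, argA2] at hψ; subst hψ; simp [PropForm.eval])
      simp [PropForm.eval] at this
    · intro h
      have := h false true ⟨rfl, rfl⟩ rfl
      apply this
      intro v hv
      have hb : pb.eval v := hv _ (by simp [G2, argA2])
      simp [G2, argB2, PropForm.eval]
      intro _
      exact hb
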